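/- Assume each f_m^j : ℝ^d → ℝ is L-smooth and f = (1/(MN)) Σ_m Σ_j f_m^j has minimizer x_⋆. Then the average over a full meta epoch of the stochastic gradients computed by Algorithm RR-CLI satisfies ‖(1/R) Σ_{r=0}^{R−1} (1/C) Σ_{m ∈ S_t^{λ_r}} (1/N) Σ_{j=0}^{N−1} ∇f_m^{π_j}(x_{m,t}^{r,j})‖² ≤ 2L² V_t + 4L (f(x_t) − f(x_⋆)), where V_t = (1/(RCN)) Σ_{r=0}^{R−1} Σ_{m ∈ S_t^{λ_r}} Σ_{j=0}^{N−1} ‖x_t − x_{m,t}^{r,j}‖². -/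

import Mathlib

open Finset RealInnerProductSpace

noncomputable section

/-- Points in `ℝ^d`. -/
abbrev Vec (d : ℕ) := EuclideanSpace ℝ (Fin d)

/-- The index (in `[M]`) of the `c`-th slot of cohort `r`, when the `M = C·R` clients are
partitioned into `R` cohorts of size `C`. -/
def cohortIdx {M C R : ℕ} (hM : M = C * R) (r : Fin R) (c : Fin C) : Fin M :=
  ⟨(r : ℕ) * C + (c : ℕ), by
    have h1 : (r : ℕ) * C + (c : ℕ) < ((r : ℕ) + 1) * C := by
      calc (r : ℕ) * C + (c : ℕ) < (r : ℕ) * C + C := Nat.add_lt_add_left c.isLt _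
        _ = ((r : ℕ) + 1) * C := by ring
    have h2 : ((r : ℕ) + 1) * C ≤ R * C := by
      gcongr
      exact Nat.succ_le_of_lt r.isLt
    have h3 : R * C = M := by rw [hM, Nat.mul_comm]
    exact h1.trans_le (h2.trans_eq h3)⟩

/-- The global objective `f = (1/(MN)) Σ_m Σ_j f_m^j`. -/
def fbar {d M N : ℕ} (f : Fin M → Fin N → Vec d → ℝ) : Vec d → ℝ :=
  fun x => ((M : ℝ) * (N : ℝ))⁻¹ * ∑ m, ∑ j, f m j x


lemma descent_lemma {d : ℕ} (φ : Vec d → ℝ) (g : Vec d → Vec d) (L : ℝ) (hL : 0 ≤ L)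
    (hg : ∀ x, HasGradientAt φ (g x) x)
    (hlip : ∀ a b, ‖g a - g b‖ ≤ L * ‖a - b‖) (x y : Vec d) :
    φ y ≤ φ x + ⟪g x, y - x⟫ + L / 2 * ‖y - x‖ ^ 2 := by
  set v := y - x with hv
  have hgc : Continuous g := by
    have : LipschitzWith (Real.toNNReal L) g := by
      refine LipschitzWith.of_dist_le_mul fun a b => ?_
      rw [dist_eq_norm, dist_eq_norm]
      calc ‖g a - g b‖ ≤ L * ‖a - b‖ := hlip a b
        _ ≤ Real.toNNReal L * ‖a - b‖ := by
            gcongr; exact Real.le_coe_toNNReal L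
    exact this.continuous
  have hF : ∀ t : ℝ, HasDerivAt (fun t : ℝ => φ (x + t • v)) ⟪g (x + t • v), v⟫ t := by
    intro t
    have hc : HasDerivAt (fun t : ℝ => x + t • v) v t := by
      simpa using ((hasDerivAt_id t).smul_const v).const_add x
    have hφ : HasFDerivAt φ (InnerProductSpace.toDual ℝ _ (g (x + t • v))) (x + t • v) :=
      (hg (x + t • v))
    have := hφ.comp_hasDerivAt t hc
    simpa [InnerProductSpace.toDual_apply_apply, Function.comp_def] using this
  have hcont : Continuous fun t : ℝ => ⟪g (x + t • v), v⟫ := by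
    apply Continuous.inner
    · exact hgc.comp (by continuity)
    · exact continuous_const
  have hint : ∫ t in (0:ℝ)..1, ⟪g (x + t • v), v⟫ = φ (x + (1:ℝ) • v) - φ (x + (0:ℝ) • v) := by
    exact intervalIntegral.integral_eq_sub_of_hasDerivAt (fun t _ => hF t)
      (hcont.intervalIntegrable 0 1)
  have key : φ y - φ x - ⟪g x, v⟫ ≤ L / 2 * ‖v‖ ^ 2 := by
    have h1 : φ y - φ x = ∫ t in (0:ℝ)..1, ⟪g (x + t • v), v⟫ := by
      rw [hint]; simp [hv]
    have h2 : (⟪g x, v⟫ : ℝ) = ∫ t in (0:ℝ)..1, ⟪g x, v⟫ := by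
      rw [intervalIntegral.integral_const]; simp
    rw [h1, h2, ← intervalIntegral.integral_sub (hcont.intervalIntegrable 0 1)
      (intervalIntegrable_const)]
    have hb : ∫ t in (0:ℝ)..1, (L * t * ‖v‖ ^ 2) = L / 2 * ‖v‖ ^ 2 := by
      rw [intervalIntegral.integral_mul_const, intervalIntegral.integral_const_mul,
        integral_id]
      norm_num
      exact Or.inl (by ring)
    rw [← hb]
    apply intervalIntegral.integral_mono_on zero_le_one
    · exact (hcont.sub continuous_const).intervalIntegrable 0 1
    · exact (Continuous.intervalIntegrable (by continuity) 0 1)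
    · intro t ht
      have : ⟪g (x + t • v), v⟫ - ⟪g x, v⟫ = ⟪g (x + t • v) - g x, v⟫ := by
        rw [inner_sub_left]
      rw [this]
      calc ⟪g (x + t • v) - g x, v⟫ ≤ ‖g (x + t • v) - g x‖ * ‖v‖ := real_inner_le_norm _ _
        _ ≤ (L * ‖x + t • v - x‖) * ‖v‖ := by gcongr; exact hlip _ _
        _ = L * t * ‖v‖ ^ 2 := by
            have : ‖x + t • v - x‖ = t * ‖v‖ := by
              simp [norm_smul, abs_of_nonneg ht.1]
            rw [this]; ring
  linarith [key]

lemma pl_lemma {d : ℕ} (φ : Vec d → ℝ) (g : Vec d → Vec d) (L : ℝ) (hL : 0 < L)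
    (hg : ∀ x, HasGradientAt φ (g x) x)
    (hlip : ∀ a b, ‖g a - g b‖ ≤ L * ‖a - b‖) (x xs : Vec d)
    (hmin : ∀ z, φ xs ≤ φ z) :
    ‖g x‖ ^ 2 ≤ 2 * L * (φ x - φ xs) := by
  have h := descent_lemma φ g L hL.le hg hlip x (x - L⁻¹ • g x)
  have h2 : φ xs ≤ φ (x - L⁻¹ • g x) := hmin _
  have e1 : x - L⁻¹ • g x - x = -(L⁻¹ • g x) := by abel
  rw [e1] at h
  have e2 : (⟪g x, -(L⁻¹ • g x)⟫ : ℝ) = -(L⁻¹ * ‖g x‖ ^ 2) := by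
    rw [inner_neg_right, real_inner_smul_right, real_inner_self_eq_norm_sq]
  have e3 : ‖-(L⁻¹ • g x)‖ ^ 2 = L⁻¹ ^ 2 * ‖g x‖ ^ 2 := by
    rw [norm_neg, norm_smul, Real.norm_eq_abs, abs_of_nonneg (inv_nonneg.mpr hL.le)]
    ring
  rw [e2, e3] at h
  have hL' : L ≠ 0 := hL.ne'
  have hkey : φ xs ≤ φ x - (2 * L)⁻¹ * ‖g x‖ ^ 2 := by
    refine h2.trans (h.trans_eq ?_)
    field_simp
    ring
  have h2L : (0:ℝ) < 2 * L := by linarith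
  have h3 : (2 * L)⁻¹ * ‖g x‖ ^ 2 ≤ φ x - φ xs := by linarith
  calc ‖g x‖ ^ 2 = 2 * L * ((2 * L)⁻¹ * ‖g x‖ ^ 2) := by field_simp
    _ ≤ 2 * L * (φ x - φ xs) := by gcongr

lemma grad_fbar {d M N : ℕ} (f : Fin M → Fin N → Vec d → ℝ)
    (hdiff : ∀ m j, Differentiable ℝ (f m j)) (x : Vec d) :
    HasGradientAt (fbar f)
      (((M : ℝ) * (N : ℝ))⁻¹ • ∑ m, ∑ j, gradient (f m j) x) x := by
  have h1 : HasFDerivAt (fun y => ∑ m, ∑ j, f m j y)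
      (∑ m, ∑ j, (InnerProductSpace.toDual ℝ (Vec d)) (gradient (f m j) x)) x :=
    HasFDerivAt.fun_sum fun m _ => HasFDerivAt.fun_sum fun j _ =>
      hasGradientAt_iff_hasFDerivAt.mp ((hdiff m j x).hasGradientAt)
  have h2 := h1.const_mul (((M : ℝ) * (N : ℝ))⁻¹)
  rw [hasGradientAt_iff_hasFDerivAt]
  convert h2 using 1
  · rfl
  · rfl
  simp [map_smulₛₗ, map_sum]

lemma lip_fbar {d M N : ℕ} (hMpos : 0 < M) (hNpos : 0 < N)
    (f : Fin M → Fin N → Vec d → ℝ) (L : ℝ)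
    (hsmooth : ∀ m j x y, ‖gradient (f m j) x - gradient (f m j) y‖ ≤ L * ‖x - y‖)
    (a b : Vec d) :
    ‖(((M : ℝ) * (N : ℝ))⁻¹ • ∑ m, ∑ j, gradient (f m j) a)
      - (((M : ℝ) * (N : ℝ))⁻¹ • ∑ m, ∑ j, gradient (f m j) b)‖ ≤ L * ‖a - b‖ := by
  have hMN : (0:ℝ) < (M : ℝ) * (N : ℝ) := by positivity
  rw [← smul_sub, ← Finset.sum_sub_distrib]
  rw [norm_smul, Real.norm_eq_abs, abs_of_nonneg (by positivity)]
  have hb : ‖∑ m : Fin M, (∑ j, gradient (f m j) a - ∑ j, gradient (f m j) b)‖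
      ≤ (M : ℝ) * (N : ℝ) * (L * ‖a - b‖) := by
    calc ‖∑ m : Fin M, (∑ j, gradient (f m j) a - ∑ j, gradient (f m j) b)‖
        ≤ ∑ m : Fin M, ‖∑ j, gradient (f m j) a - ∑ j, gradient (f m j) b‖ :=
          norm_sum_le _ _
      _ ≤ ∑ _m : Fin M, ((N : ℝ) * (L * ‖a - b‖)) := by
          apply Finset.sum_le_sum
          intro m _
          rw [← Finset.sum_sub_distrib]
          calc ‖∑ j, (gradient (f m j) a - gradient (f m j) b)‖
              ≤ ∑ j, ‖gradient (f m j) a - gradient (f m j) b‖ := norm_sum_le _ _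
            _ ≤ ∑ _j : Fin N, (L * ‖a - b‖) :=
                Finset.sum_le_sum fun j _ => hsmooth m j a b
            _ = (N : ℝ) * (L * ‖a - b‖) := by
                rw [Finset.sum_const, card_univ]; simp [nsmul_eq_mul]
      _ = (M : ℝ) * ((N : ℝ) * (L * ‖a - b‖)) := by
          rw [Finset.sum_const, card_univ]; simp [nsmul_eq_mul]
      _ = (M : ℝ) * (N : ℝ) * (L * ‖a - b‖) := by ring
  calc ((M : ℝ) * (N : ℝ))⁻¹ * ‖∑ m : Fin M, (∑ j, gradient (f m j) a - ∑ j, gradient (f m j) b)‖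
      ≤ ((M : ℝ) * (N : ℝ))⁻¹ * ((M : ℝ) * (N : ℝ) * (L * ‖a - b‖)) := by
        exact mul_le_mul_of_nonneg_left hb (by positivity)
    _ = L * ‖a - b‖ := by field_simp

lemma cohort_bij {M C R : ℕ} (hM : M = C * R) (hC : 0 < C) :
    Function.Bijective (fun p : Fin R × Fin C => cohortIdx hM p.1 p.2) := by
  rw [Fintype.bijective_iff_injective_and_card]
  constructor
  · rintro ⟨r, c⟩ ⟨r', c'⟩ h
    have h' : (r : ℕ) * C + c = (r' : ℕ) * C + c' := congrArg Fin.val h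
    have hr : (r : ℕ) = r' := by
      have e1 : ((r : ℕ) * C + c) / C = r := by
        rw [Nat.mul_comm, Nat.mul_add_div hC, Nat.div_eq_of_lt c.isLt, Nat.add_zero]
      have e2 : ((r' : ℕ) * C + c') / C = r' := by
        rw [Nat.mul_comm, Nat.mul_add_div hC, Nat.div_eq_of_lt c'.isLt, Nat.add_zero]
      rw [← e1, ← e2, h']
    have hc : (c : ℕ) = c' := by
      rw [hr] at h'
      exact Nat.add_left_cancel h'
    exact Prod.ext (Fin.ext hr) (Fin.ext hc)
  · simp [hM, Nat.mul_comm]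

lemma reindex_sum {d M C R : ℕ} (hM : M = C * R) (hC : 0 < C) (ρ : Equiv.Perm (Fin M))
    (h : Fin M → Vec d) :
    ∑ r : Fin R, ∑ c : Fin C, h (ρ (cohortIdx hM r c)) = ∑ m, h m := by
  rw [← Fintype.sum_prod_type']
  exact Fintype.sum_bijective _ (ρ.bijective.comp (cohort_bij hM hC)) _ _ (fun p => rfl)

lemma triple_norm_sq {d R C N : ℕ} (v : Fin R → Fin C → Fin N → Vec d) :
    ‖∑ r, ∑ c, ∑ j, v r c j‖ ^ 2
      ≤ ((R : ℝ) * (C : ℝ) * (N : ℝ)) * ∑ r, ∑ c, ∑ j, ‖v r c j‖ ^ 2 := by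
  have h1 : ‖∑ r, ∑ c, ∑ j, v r c j‖ ≤ ∑ r, ∑ c, ∑ j, ‖v r c j‖ := by
    refine (norm_sum_le _ _).trans (Finset.sum_le_sum fun r _ => ?_)
    refine (norm_sum_le _ _).trans (Finset.sum_le_sum fun c _ => ?_)
    exact norm_sum_le _ _
  have h2 : (∑ p : Fin R × Fin C × Fin N, ‖v p.1 p.2.1 p.2.2‖) ^ 2
      ≤ (Fintype.card (Fin R × Fin C × Fin N) : ℝ)
        * ∑ p : Fin R × Fin C × Fin N, ‖v p.1 p.2.1 p.2.2‖ ^ 2 := by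
    have := sq_sum_le_card_mul_sum_sq (s := (univ : Finset (Fin R × Fin C × Fin N)))
      (f := fun p => ‖v p.1 p.2.1 p.2.2‖)
    simpa [card_univ] using this
  have e1 : ∑ p : Fin R × Fin C × Fin N, ‖v p.1 p.2.1 p.2.2‖
      = ∑ r, ∑ c, ∑ j, ‖v r c j‖ := by
    rw [Fintype.sum_prod_type]
    exact Finset.sum_congr rfl fun r _ => Fintype.sum_prod_type _
  have e2 : ∑ p : Fin R × Fin C × Fin N, ‖v p.1 p.2.1 p.2.2‖ ^ 2
      = ∑ r, ∑ c, ∑ j, ‖v r c j‖ ^ 2 := by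
    rw [Fintype.sum_prod_type]
    exact Finset.sum_congr rfl fun r _ => Fintype.sum_prod_type _
  have e3 : (Fintype.card (Fin R × Fin C × Fin N) : ℝ) = (R : ℝ) * (C : ℝ) * (N : ℝ) := by
    simp [Fintype.card_prod]; ring
  calc ‖∑ r, ∑ c, ∑ j, v r c j‖ ^ 2 ≤ (∑ r, ∑ c, ∑ j, ‖v r c j‖) ^ 2 := by
        apply pow_le_pow_left₀ (norm_nonneg _) h1
    _ ≤ ((R : ℝ) * (C : ℝ) * (N : ℝ)) * ∑ r, ∑ c, ∑ j, ‖v r c j‖ ^ 2 := by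
        rw [← e1, ← e2, ← e3]; exact h2


/-- If each `f_m^j` is `L`-smooth and `f` is minimized at `x_⋆`, then
the meta-epoch average of the stochastic gradients computed by `RR-CLI` satisfies
`‖(1/R) Σ_r (1/C) Σ_{m ∈ S_t^{λ_r}} (1/N) Σ_j ∇f_m^{π_j}(x_{m,t}^{r,j})‖²
  ≤ 2L² V_t + 4L (f(x_t) − f(x_⋆))`, where
`V_t = (1/(RCN)) Σ_r Σ_{m ∈ S_t^{λ_r}} Σ_j ‖x_t − x_{m,t}^{r,j}‖²`.  Here the clients
are partitioned into `R` cohorts of size `C` by the permutation `ρ`, and `πd m` is the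
permutation of the data of client `m`. -/
theorem statement15 (d M N C R : ℕ) (hM : M = C * R) (hC : 0 < C) (hN : 0 < N)
    (hR : 0 < R)
    (L : ℝ) (hL : 0 < L)
    (f : Fin M → Fin N → Vec d → ℝ)
    (hdiff : ∀ m j, Differentiable ℝ (f m j))
    (hsmooth : ∀ m j x y, ‖gradient (f m j) x - gradient (f m j) y‖ ≤ L * ‖x - y‖)
    (γ η : ℝ) (hγ0 : 0 < γ) (hη0 : 0 < η)
    (xs xt : Vec d) (hmin : ∀ x, fbar f xs ≤ fbar f x)
    (ρ : Equiv.Perm (Fin M)) (πd : Fin M → Equiv.Perm (Fin N))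
    -- the iterates of one meta epoch of Algorithm RR-CLI, started at `xt`
    (Xr : ℕ → Vec d) (Xl : ℕ → Fin M → ℕ → Vec d)
    (hX0 : Xr 0 = xt)
    (hlinit : ∀ r m, Xl r m 0 = Xr r)
    (hlstep : ∀ r m (j : ℕ) (hj : j < N),
      Xl r m (j + 1) = Xl r m j - γ • gradient (f m (πd m ⟨j, hj⟩)) (Xl r m j))
    (hrstep : ∀ (r : Fin R),
      Xr ((r : ℕ) + 1) =
        Xr r -
          η • ((C : ℝ)⁻¹ • ∑ c : Fin C,
            (γ * (N : ℝ))⁻¹ •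
              (Xr r - Xl r (ρ (cohortIdx hM r c)) N))) :
    ‖(R : ℝ)⁻¹ • ∑ r : Fin R, (C : ℝ)⁻¹ • ∑ c : Fin C,
        (N : ℝ)⁻¹ • ∑ j : Fin N,
          gradient (f (ρ (cohortIdx hM r c)) (πd (ρ (cohortIdx hM r c)) j))
            (Xl r (ρ (cohortIdx hM r c)) (j : ℕ))‖ ^ 2
      ≤ 2 * L ^ 2 *
          (((R : ℝ) * (C : ℝ) * (N : ℝ))⁻¹ *
            ∑ r : Fin R, ∑ c : Fin C, ∑ j : Fin N,
              ‖xt - Xl r (ρ (cohortIdx hM r c)) (j : ℕ)‖ ^ 2)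
        + 4 * L * (fbar f xt - fbar f xs) := by
  have hMpos : 0 < M := by rw [hM]; exact Nat.mul_pos hC hR
  have hRCN : (0:ℝ) < (R : ℝ) * (C : ℝ) * (N : ℝ) := by positivity
  set g : Vec d → Vec d := fun x => ((M : ℝ) * (N : ℝ))⁻¹ • ∑ m, ∑ j, gradient (f m j) x
    with hgdef
  have hgrad : ∀ x, HasGradientAt (fbar f) (g x) x := fun x => grad_fbar f hdiff x
  have hlip : ∀ a b, ‖g a - g b‖ ≤ L * ‖a - b‖ := fun a b => lip_fbar hMpos hN f L hsmooth a b
  have hPL : ‖g xt‖ ^ 2 ≤ 2 * L * (fbar f xt - fbar f xs) :=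
    pl_lemma (fbar f) g L hL hgrad hlip xt xs hmin
  have hflat : ∀ v : Fin R → Fin C → Fin N → Vec d,
      (R : ℝ)⁻¹ • ∑ r : Fin R, (C : ℝ)⁻¹ • ∑ c : Fin C, (N : ℝ)⁻¹ • ∑ j : Fin N, v r c j
        = ((R : ℝ) * (C : ℝ) * (N : ℝ))⁻¹ • ∑ r : Fin R, ∑ c : Fin C, ∑ j : Fin N, v r c j := by
    intro v
    simp only [← Finset.smul_sum, smul_smul]
    congr 1
    field_simp
  rw [hflat]
  set κ : ℝ := ((R : ℝ) * (C : ℝ) * (N : ℝ))⁻¹ with hκ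
  have hκpos : 0 < κ := by rw [hκ]; positivity
  -- split the gradient sum into deviation + gradient at xt
  have hsplit : (κ • ∑ r : Fin R, ∑ c : Fin C, ∑ j : Fin N,
        gradient (f (ρ (cohortIdx hM r c)) (πd (ρ (cohortIdx hM r c)) j))
          (Xl r (ρ (cohortIdx hM r c)) (j : ℕ)))
      = (κ • ∑ r : Fin R, ∑ c : Fin C, ∑ j : Fin N,
          (gradient (f (ρ (cohortIdx hM r c)) (πd (ρ (cohortIdx hM r c)) j))
              (Xl r (ρ (cohortIdx hM r c)) (j : ℕ))
            - gradient (f (ρ (cohortIdx hM r c)) (πd (ρ (cohortIdx hM r c)) j)) xt))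
        + g xt := by
    have h1 : (∑ r : Fin R, ∑ c : Fin C, ∑ j : Fin N,
          gradient (f (ρ (cohortIdx hM r c)) (πd (ρ (cohortIdx hM r c)) j))
            (Xl r (ρ (cohortIdx hM r c)) (j : ℕ)))
        = (∑ r : Fin R, ∑ c : Fin C, ∑ j : Fin N,
            (gradient (f (ρ (cohortIdx hM r c)) (πd (ρ (cohortIdx hM r c)) j))
                (Xl r (ρ (cohortIdx hM r c)) (j : ℕ))
              - gradient (f (ρ (cohortIdx hM r c)) (πd (ρ (cohortIdx hM r c)) j)) xt))
          + ∑ r : Fin R, ∑ c : Fin C, ∑ j : Fin N,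
              gradient (f (ρ (cohortIdx hM r c)) (πd (ρ (cohortIdx hM r c)) j)) xt := by
      rw [← Finset.sum_add_distrib]
      refine Finset.sum_congr rfl fun r _ => ?_
      rw [← Finset.sum_add_distrib]
      refine Finset.sum_congr rfl fun c _ => ?_
      rw [← Finset.sum_add_distrib]
      refine Finset.sum_congr rfl fun j _ => ?_
      abel
    have h2 : κ • (∑ r : Fin R, ∑ c : Fin C, ∑ j : Fin N,
        gradient (f (ρ (cohortIdx hM r c)) (πd (ρ (cohortIdx hM r c)) j)) xt) = g xt := by
      have hj : ∀ m : Fin M, (∑ j : Fin N, gradient (f m (πd m j)) xt)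
          = ∑ j : Fin N, gradient (f m j) xt :=
        fun m => Equiv.sum_comp (πd m) (fun j => gradient (f m j) xt)
      have h3 : (∑ r : Fin R, ∑ c : Fin C, ∑ j : Fin N,
            gradient (f (ρ (cohortIdx hM r c)) (πd (ρ (cohortIdx hM r c)) j)) xt)
          = ∑ m, ∑ j, gradient (f m j) xt := by
        rw [← reindex_sum hM hC ρ (fun m => ∑ j : Fin N, gradient (f m j) xt)]
        exact Finset.sum_congr rfl fun r _ => Finset.sum_congr rfl fun c _ => hj _
      rw [h3, hgdef, hκ]
      congr 1
      rw [hM]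
      push_cast
      ring
    rw [h1, smul_add, h2]
  rw [hsplit]
  set A : Vec d := κ • ∑ r : Fin R, ∑ c : Fin C, ∑ j : Fin N,
      (gradient (f (ρ (cohortIdx hM r c)) (πd (ρ (cohortIdx hM r c)) j))
          (Xl r (ρ (cohortIdx hM r c)) (j : ℕ))
        - gradient (f (ρ (cohortIdx hM r c)) (πd (ρ (cohortIdx hM r c)) j)) xt) with hA
  have hAbound : ‖A‖ ^ 2 ≤ L ^ 2 * (κ * ∑ r : Fin R, ∑ c : Fin C, ∑ j : Fin N,
      ‖xt - Xl r (ρ (cohortIdx hM r c)) (j : ℕ)‖ ^ 2) := by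
    have hnorm : ‖A‖ ^ 2 = κ ^ 2 * ‖∑ r : Fin R, ∑ c : Fin C, ∑ j : Fin N,
        (gradient (f (ρ (cohortIdx hM r c)) (πd (ρ (cohortIdx hM r c)) j))
            (Xl r (ρ (cohortIdx hM r c)) (j : ℕ))
          - gradient (f (ρ (cohortIdx hM r c)) (πd (ρ (cohortIdx hM r c)) j)) xt)‖ ^ 2 := by
      rw [hA, norm_smul, Real.norm_eq_abs, abs_of_nonneg hκpos.le, mul_pow]
    rw [hnorm]
    have htri := triple_norm_sq (fun r c j =>
      gradient (f (ρ (cohortIdx hM r c)) (πd (ρ (cohortIdx hM r c)) j))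
          (Xl r (ρ (cohortIdx hM r c)) (j : ℕ))
        - gradient (f (ρ (cohortIdx hM r c)) (πd (ρ (cohortIdx hM r c)) j)) xt)
    have hptwise : (∑ r : Fin R, ∑ c : Fin C, ∑ j : Fin N,
          ‖gradient (f (ρ (cohortIdx hM r c)) (πd (ρ (cohortIdx hM r c)) j))
              (Xl r (ρ (cohortIdx hM r c)) (j : ℕ))
            - gradient (f (ρ (cohortIdx hM r c)) (πd (ρ (cohortIdx hM r c)) j)) xt‖ ^ 2)
        ≤ ∑ r : Fin R, ∑ c : Fin C, ∑ j : Fin N,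
            L ^ 2 * ‖xt - Xl r (ρ (cohortIdx hM r c)) (j : ℕ)‖ ^ 2 := by
      refine Finset.sum_le_sum fun r _ => Finset.sum_le_sum fun c _ =>
        Finset.sum_le_sum fun j _ => ?_
      have h := hsmooth (ρ (cohortIdx hM r c)) (πd (ρ (cohortIdx hM r c)) j)
        (Xl r (ρ (cohortIdx hM r c)) (j : ℕ)) xt
      calc ‖gradient (f (ρ (cohortIdx hM r c)) (πd (ρ (cohortIdx hM r c)) j))
              (Xl r (ρ (cohortIdx hM r c)) (j : ℕ))
            - gradient (f (ρ (cohortIdx hM r c)) (πd (ρ (cohortIdx hM r c)) j)) xt‖ ^ 2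
          ≤ (L * ‖Xl r (ρ (cohortIdx hM r c)) (j : ℕ) - xt‖) ^ 2 :=
            pow_le_pow_left₀ (norm_nonneg _) h 2
        _ = L ^ 2 * ‖xt - Xl r (ρ (cohortIdx hM r c)) (j : ℕ)‖ ^ 2 := by
            rw [norm_sub_rev]; ring
    calc κ ^ 2 * ‖∑ r : Fin R, ∑ c : Fin C, ∑ j : Fin N,
          (gradient (f (ρ (cohortIdx hM r c)) (πd (ρ (cohortIdx hM r c)) j))
              (Xl r (ρ (cohortIdx hM r c)) (j : ℕ))
            - gradient (f (ρ (cohortIdx hM r c)) (πd (ρ (cohortIdx hM r c)) j)) xt)‖ ^ 2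
        ≤ κ ^ 2 * (((R : ℝ) * (C : ℝ) * (N : ℝ)) * ∑ r : Fin R, ∑ c : Fin C, ∑ j : Fin N,
            ‖gradient (f (ρ (cohortIdx hM r c)) (πd (ρ (cohortIdx hM r c)) j))
                (Xl r (ρ (cohortIdx hM r c)) (j : ℕ))
              - gradient (f (ρ (cohortIdx hM r c)) (πd (ρ (cohortIdx hM r c)) j)) xt‖ ^ 2) :=
          mul_le_mul_of_nonneg_left htri (by positivity)
      _ = κ * ∑ r : Fin R, ∑ c : Fin C, ∑ j : Fin N,
            ‖gradient (f (ρ (cohortIdx hM r c)) (πd (ρ (cohortIdx hM r c)) j))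
                (Xl r (ρ (cohortIdx hM r c)) (j : ℕ))
              - gradient (f (ρ (cohortIdx hM r c)) (πd (ρ (cohortIdx hM r c)) j)) xt‖ ^ 2 := by
          rw [hκ]
          field_simp
      _ ≤ κ * ∑ r : Fin R, ∑ c : Fin C, ∑ j : Fin N,
            L ^ 2 * ‖xt - Xl r (ρ (cohortIdx hM r c)) (j : ℕ)‖ ^ 2 :=
          mul_le_mul_of_nonneg_left hptwise hκpos.le
      _ = L ^ 2 * (κ * ∑ r : Fin R, ∑ c : Fin C, ∑ j : Fin N,
            ‖xt - Xl r (ρ (cohortIdx hM r c)) (j : ℕ)‖ ^ 2) := by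
          simp only [← Finset.mul_sum]
          ring
  have hyoung : ‖A + g xt‖ ^ 2 ≤ 2 * ‖A‖ ^ 2 + 2 * ‖g xt‖ ^ 2 := by
    have h := norm_add_le A (g xt)
    have h2 : ‖A + g xt‖ ^ 2 ≤ (‖A‖ + ‖g xt‖) ^ 2 := pow_le_pow_left₀ (norm_nonneg _) h 2
    nlinarith [sq_nonneg (‖A‖ - ‖g xt‖)]
  calc ‖A + g xt‖ ^ 2 ≤ 2 * ‖A‖ ^ 2 + 2 * ‖g xt‖ ^ 2 := hyoung
    _ ≤ 2 * (L ^ 2 * (κ * ∑ r : Fin R, ∑ c : Fin C, ∑ j : Fin N,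
          ‖xt - Xl r (ρ (cohortIdx hM r c)) (j : ℕ)‖ ^ 2))
        + 2 * (2 * L * (fbar f xt - fbar f xs)) := by
        gcongr
    _ = 2 * L ^ 2 * (κ * ∑ r : Fin R, ∑ c : Fin C, ∑ j : Fin N,
          ‖xt - Xl r (ρ (cohortIdx hM r c)) (j : ℕ)‖ ^ 2)
        + 4 * L * (fbar f xt - fbar f xs) := by ring


end
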